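/- Let E, F be vector lattices with F Dedekind complete, T : E → F a positive abstract Uryson operator, ρ a band projection on F, and D ⊆ E an admissible set. Then the map Π : U(E,F) → U(E,F), Π(T) = ρ ∘ (π^D T), satisfies 0 ≤ Π(T) ≤ T for every positive T and Π² = Π; hence Π is an order projection on U(E,F). -/

import Mathlib

/-!
`π^D T x` is the supremum of `T` over the fragments of `x` that lie in `D`. Orthogonal additivity
of `Π T` comes from a Riesz-type decomposition: a fragment of a disjoint sum `x₁ + x₂` splits into
fragments of `x₁` and of `x₂`. Additivity in `T` holds because any two fragments of `x` lying in
`D` are contained in a common one, and idempotence because `π^D T = T` on `D`.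

For the disjointness of `Π T` and `T - Π T`, let `R ≤ Π T` and `R ≤ T - Π T` and put
`P = R x ⊔ 0`, which `ρ` fixes since `0 ≤ P ≤ ρ (π^D T x)`. For a fragment `y ∈ D` of `x`,
splitting `R x = R y + R (x - y)` and applying `ρ`, which annihilates `T y - ρ (T y)`, gives
`P ≤ ρ (π^D T (x - y))`, whence `T y ≤ π^D T x - P`. Taking the supremum over `y` forces `P ≤ 0`.
-/

/-- Orthogonal additivity: `T (x + y) = T x + T y` whenever `|x| ⊓ |y| = 0`. -/
def OrthAdd {E F : Type*} [Lattice E] [AddCommGroup E] [AddCommGroup F]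
    (T : E → F) : Prop :=
  ∀ x y : E, |x| ⊓ |y| = 0 → T (x + y) = T x + T y

/-- `T` maps order bounded sets to order bounded sets. -/
def OrderBoundedMap {E F : Type*} [Preorder E] [Preorder F] (T : E → F) : Prop :=
  ∀ a b : E, ∃ c d : F, ∀ x ∈ Set.Icc a b, T x ∈ Set.Icc c d

/-- An abstract Uryson operator: orthogonally additive and order bounded. -/
def Uryson {E F : Type*} [Lattice E] [AddCommGroup E] [Lattice F] [AddCommGroup F]
    (T : E → F) : Prop :=
  OrthAdd T ∧ OrderBoundedMap T

/-- `z` is a fragment (component) of `x`: `z ⊥ (x - z)`. -/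
def Fragment {E : Type*} [Lattice E] [AddCommGroup E] (z x : E) : Prop :=
  |z| ⊓ |x - z| = 0

/-- A band (order) projection on a Dedekind complete vector lattice `F`:
additive, idempotent, and `0 ≤ ρ x ≤ x` for all `x ≥ 0`. -/
def IsBandProj {F : Type*} [Lattice F] [AddCommGroup F] (ρ : F → F) : Prop :=
  (∀ x y : F, ρ (x + y) = ρ x + ρ y) ∧ (∀ x, ρ (ρ x) = ρ x) ∧
    ∀ x : F, 0 ≤ x → 0 ≤ ρ x ∧ ρ x ≤ x

/-- Disjointness of two positive abstract Uryson operators `T, S` in `U(E,F)`: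
`T ⊓ S = 0`, i.e. every abstract Uryson operator `R` with `R ≤ T` and `R ≤ S`
(pointwise, which is the order of `U(E,F)`) satisfies `R ≤ 0`. -/
def UDisjointPos {E F : Type*} [Lattice E] [AddCommGroup E] [Lattice F] [AddCommGroup F]
    (T S : E → F) : Prop :=
  ∀ R : E → F, Uryson R → (∀ x, R x ≤ T x) → (∀ x, R x ≤ S x) → ∀ x, R x ≤ 0

/-- A subset `D` of a vector lattice is admissible if it contains every fragment of each
of its elements and is closed under sums of disjoint pairs of its elements. -/
def Admissible {E : Type*} [Lattice E] [AddCommGroup E] (D : Set E) : Prop :=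
  (∀ x ∈ D, ∀ y : E, Fragment y x → y ∈ D) ∧
    ∀ x ∈ D, ∀ y ∈ D, |x| ⊓ |y| = 0 → x + y ∈ D

/-- `π^D T : x ↦ sup { T y : y ⊑ x, y ∈ D }` followed by a band projection `ρ` on `F`. -/
def PiProj {E F : Type*} [Lattice E] [AddCommGroup E]
    [ConditionallyCompleteLattice F] [AddCommGroup F]
    (ρ : F → F) (D : Set E) (T : E → F) : E → F :=
  fun x => ρ (sSup {v : F | ∃ y : E, Fragment y x ∧ y ∈ D ∧ v = T y})

theorem inf_eq_zero_of_le {α : Type*} [Lattice α] [Zero α] {a b a' b' : α} (ha : 0 ≤ a)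
    (hb : 0 ≤ b) (haa' : a ≤ a') (hbb' : b ≤ b') (h : a' ⊓ b' = 0) : a ⊓ b = 0 :=
  le_antisymm ((inf_le_inf haa' hbb').trans h.le) (le_inf ha hb)

section LatticeAddCommGroup

variable {α : Type*} [Lattice α] [AddCommGroup α] {x y z : α}

theorem fragment_add_left (h : |y| ⊓ |z| = 0) : Fragment y (y + z) := by
  rwa [Fragment, add_sub_cancel_left]

theorem fragment_add_right (h : |y| ⊓ |z| = 0) : Fragment z (y + z) := by
  rwa [Fragment, add_sub_cancel_right, inf_comm]

theorem Fragment.sub (h : Fragment y x) : Fragment (x - y) x := by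
  rwa [Fragment, sub_sub_cancel, inf_comm]

end LatticeAddCommGroup

section LatticeOrderedGroup

variable {α : Type*} [Lattice α] [AddCommGroup α] [AddLeftMono α]

theorem inf_add_le_inf_add_inf {a b c : α} (ha : 0 ≤ a) (hb : 0 ≤ b) (hc : 0 ≤ c) :
    c ⊓ (a + b) ≤ c ⊓ a + c ⊓ b := by
  have h : c ⊓ (a + b) - c ⊓ a ≤ c ⊓ b := by
    rw [sub_inf]
    refine sup_le ((sub_nonpos.2 inf_le_left).trans (le_inf hc hb)) (le_inf ?_ ?_)
    · exact (sub_le_sub_right inf_le_left a).trans (sub_le_self c ha)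
    · exact (sub_le_sub_right inf_le_right a).trans (add_sub_cancel_left a b).le
  exact sub_le_iff_le_add'.1 h

theorem add_inf_eq_zero {a b c : α} (ha : 0 ≤ a) (hb : 0 ≤ b) (hc : 0 ≤ c)
    (hac : a ⊓ c = 0) (hbc : b ⊓ c = 0) : (a + b) ⊓ c = 0 := by
  refine le_antisymm ?_ (le_inf (add_nonneg ha hb) hc)
  calc (a + b) ⊓ c = c ⊓ (a + b) := inf_comm _ _
    _ ≤ c ⊓ a + c ⊓ b := inf_add_le_inf_add_inf ha hb hc
    _ = 0 := by rw [inf_comm c a, inf_comm c b, hac, hbc, add_zero]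

theorem inf_add_inf_eq_self {a b p : α} (ha : 0 ≤ a) (hb : 0 ≤ b) (hab : a ⊓ b = 0)
    (hp : 0 ≤ p) (hpab : p ≤ a + b) : p ⊓ a + p ⊓ b = p := by
  refine le_antisymm ?_ ?_
  · have hdisj : (p ⊓ a) ⊓ (p ⊓ b) = 0 :=
      inf_eq_zero_of_le (le_inf hp ha) (le_inf hp hb) inf_le_right inf_le_right hab
    rw [← inf_add_sup, hdisj, zero_add]
    exact sup_le inf_le_left inf_le_left
  · calc p = p ⊓ (a + b) := (inf_eq_left.2 hpab).symm
      _ ≤ p ⊓ a + p ⊓ b := inf_add_le_inf_add_inf ha hb hp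

theorem add_eq_sup_of_inf_eq_zero {a b : α} (h : a ⊓ b = 0) : a + b = a ⊔ b := by
  rw [← inf_add_sup, h, zero_add]

theorem posPart_le_abs (s : α) : s⁺ ≤ |s| :=
  sup_le (le_abs_self s) (abs_nonneg s)

theorem negPart_le_abs (s : α) : s⁻ ≤ |s| :=
  sup_le (neg_le_abs s) (abs_nonneg s)

theorem abs_sub_le_abs_add_abs (a b : α) : |a - b| ≤ |a| + |b| := by
  simpa [sub_eq_add_neg] using abs_add_le a (-b)

theorem eq_zero_of_abs_le_zero {d : α} (h : |d| ≤ 0) : d = 0 :=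
  le_antisymm ((le_abs_self d).trans h) (neg_nonpos.1 ((neg_le_abs d).trans h))

theorem abs_le_abs_add_of_inf_eq_zero {u v : α} (h : |u| ⊓ |v| = 0) : |u| ≤ |u + v| := by
  have huv : |u| ≤ |u + v| + |v| := by simpa using abs_sub_le_abs_add_abs (u + v) v
  calc |u| = |u| ⊓ (|u + v| + |v|) := (inf_eq_left.2 huv).symm
    _ ≤ |u| ⊓ |u + v| + |u| ⊓ |v| :=
      inf_add_le_inf_add_inf (abs_nonneg _) (abs_nonneg _) (abs_nonneg _)
    _ ≤ |u + v| := by rw [h, add_zero]; exact inf_le_right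

theorem abs_add_of_inf_eq_zero {u v : α} (h : |u| ⊓ |v| = 0) : |u + v| = |u| + |v| := by
  refine le_antisymm (abs_add_le u v) ?_
  rw [add_eq_sup_of_inf_eq_zero h]
  refine sup_le (abs_le_abs_add_of_inf_eq_zero h) ?_
  rw [add_comm]
  exact abs_le_abs_add_of_inf_eq_zero (by rwa [inf_comm])

theorem fragment_zero (x : α) : Fragment 0 x := by
  simp [Fragment]

theorem fragment_self (x : α) : Fragment x x := by
  simp [Fragment]

namespace Fragment

variable {x y z : α}

theorem abs_le (h : Fragment y x) : |y| ≤ |x| :=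
  calc |y| ≤ |y| + |x - y| := le_add_of_nonneg_right (abs_nonneg _)
    _ = |x| := by rw [← abs_add_of_inf_eq_zero h, add_sub_cancel]

theorem add_of_fragment_sub (hy : Fragment y x) (hz : Fragment z (x - y)) :
    Fragment (y + z) x ∧ |y| ⊓ |z| = 0 := by
  have hyz : |y| ⊓ |z| = 0 :=
    inf_eq_zero_of_le (abs_nonneg _) (abs_nonneg _) le_rfl hz.abs_le hy
  have hy' : |y| ⊓ |x - y - z| = 0 :=
    inf_eq_zero_of_le (abs_nonneg _) (abs_nonneg _) le_rfl hz.sub.abs_le hy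
  refine ⟨?_, hyz⟩
  rw [Fragment, abs_add_of_inf_eq_zero hyz, sub_add_eq_sub_sub]
  exact add_inf_eq_zero (abs_nonneg _) (abs_nonneg _) (abs_nonneg _) hy' hz

theorem add_right_of_inf_eq_zero {w : α} (h : Fragment y x) (hxw : |x| ⊓ |w| = 0) :
    Fragment y (x + w) := by
  have hw : |x - y| ⊓ |w| = 0 :=
    inf_eq_zero_of_le (abs_nonneg _) (abs_nonneg _) h.sub.abs_le le_rfl hxw
  have hyw : |y| ⊓ |w| = 0 :=
    inf_eq_zero_of_le (abs_nonneg _) (abs_nonneg _) h.abs_le le_rfl hxw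
  rw [Fragment, add_sub_right_comm, abs_add_of_inf_eq_zero hw, inf_comm]
  exact add_inf_eq_zero (abs_nonneg _) (abs_nonneg _) (abs_nonneg _)
    (by rw [inf_comm]; exact h) (by rwa [inf_comm])

theorem add {x₁ x₂ y₁ y₂ : α} (hx : |x₁| ⊓ |x₂| = 0) (h₁ : Fragment y₁ x₁)
    (h₂ : Fragment y₂ x₂) : Fragment (y₁ + y₂) (x₁ + x₂) ∧ |y₁| ⊓ |y₂| = 0 := by
  have hx' : |x₂| ⊓ |x₁ - y₁| = 0 :=
    inf_eq_zero_of_le (abs_nonneg _) (abs_nonneg _) le_rfl h₁.sub.abs_le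
      (by rwa [inf_comm])
  have h₂' : Fragment y₂ (x₁ + x₂ - y₁) := by
    rw [add_sub_right_comm, add_comm]
    exact h₂.add_right_of_inf_eq_zero hx'
  exact (h₁.add_right_of_inf_eq_zero hx).add_of_fragment_sub h₂'

end Fragment

theorem abs_add_le_of_inf_eq_zero {u v c : α} (h : |u| ⊓ |v| = 0) (hu : |u| ≤ c)
    (hv : |v| ≤ c) : |u + v| ≤ c := by
  rw [abs_add_of_inf_eq_zero h, add_eq_sup_of_inf_eq_zero h]
  exact sup_le hu hv

theorem eq_of_add_eq_add_of_abs_le {a b u₁ u₂ v₁ v₂ : α} (ha : 0 ≤ a) (hb : 0 ≤ b)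
    (hab : a ⊓ b = 0) (h : u₁ + u₂ = v₁ + v₂) (hu₁ : |u₁| ≤ a) (hv₁ : |v₁| ≤ a)
    (hu₂ : |u₂| ≤ b) (hv₂ : |v₂| ≤ b) : u₁ = v₁ := by
  have hab₂ : (a + a) ⊓ (b + b) = 0 := by
    have h' : (a + a) ⊓ b = 0 := add_inf_eq_zero ha ha hb hab hab
    rw [inf_comm] at h' ⊢
    exact add_inf_eq_zero hb hb (add_nonneg ha ha) h' h'
  have hsub : u₁ - v₁ = v₂ - u₂ := sub_eq_sub_iff_add_eq_add.2 (by rw [h, add_comm v₂])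
  have h₁ : |u₁ - v₁| ≤ a + a := (abs_sub_le_abs_add_abs u₁ v₁).trans (add_le_add hu₁ hv₁)
  have h₂ : |u₁ - v₁| ≤ b + b :=
    hsub ▸ (abs_sub_le_abs_add_abs v₂ u₂).trans (add_le_add hv₂ hu₂)
  exact sub_eq_zero.1 (eq_zero_of_abs_le_zero ((le_inf h₁ h₂).trans hab₂.le))

/-- Riesz decomposition: `s⁺ ⊓ a - s⁻ ⊓ a` is the part of `s` lying in the band of `a`. -/
theorem exists_add_eq_of_abs_le_add {a b s : α} (ha : 0 ≤ a) (hb : 0 ≤ b) (hab : a ⊓ b = 0)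
    (hs : |s| ≤ a + b) : ∃ s₁ s₂, |s₁| ≤ a ⊓ |s| ∧ |s₂| ≤ b ⊓ |s| ∧ s₁ + s₂ = s := by
  have abs_part_le : ∀ {c : α}, 0 ≤ c → |s⁺ ⊓ c - s⁻ ⊓ c| ≤ c ⊓ |s| := fun {c} hc => by
    have hpos : s⁺ ⊓ c ≤ c ⊓ |s| := le_inf inf_le_right (inf_le_left.trans (posPart_le_abs s))
    have hneg : s⁻ ⊓ c ≤ c ⊓ |s| := le_inf inf_le_right (inf_le_left.trans (negPart_le_abs s))
    rw [abs_le', neg_sub]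
    exact ⟨(sub_le_self _ (le_inf (negPart_nonneg s) hc)).trans hpos,
      (sub_le_self _ (le_inf (posPart_nonneg s) hc)).trans hneg⟩
  refine ⟨_, _, abs_part_le ha, abs_part_le hb, ?_⟩
  have hpos := inf_add_inf_eq_self ha hb hab (posPart_nonneg s) ((posPart_le_abs s).trans hs)
  have hneg := inf_add_inf_eq_self ha hb hab (negPart_nonneg s) ((negPart_le_abs s).trans hs)
  calc s⁺ ⊓ a - s⁻ ⊓ a + (s⁺ ⊓ b - s⁻ ⊓ b) = (s⁺ ⊓ a + s⁺ ⊓ b) - (s⁻ ⊓ a + s⁻ ⊓ b) := by abel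
    _ = s := by rw [hpos, hneg, posPart_sub_negPart]

theorem Fragment.exists_add_of_inf_eq_zero {x₁ x₂ z : α} (hx : |x₁| ⊓ |x₂| = 0)
    (hz : Fragment z (x₁ + x₂)) :
    ∃ z₁ z₂, Fragment z₁ x₁ ∧ Fragment z₂ x₂ ∧ |z₁| ⊓ |z₂| = 0 ∧ z₁ + z₂ = z := by
  have ha : 0 ≤ |x₁| := abs_nonneg _
  have hb : 0 ≤ |x₂| := abs_nonneg _
  obtain ⟨z₁, z₂, hz₁, hz₂, rfl⟩ :=
    exists_add_eq_of_abs_le_add ha hb hx (hz.abs_le.trans (abs_add_le _ _))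
  obtain ⟨w₁, w₂, hw₁, hw₂, hw⟩ :=
    exists_add_eq_of_abs_le_add ha hb hx (hz.sub.abs_le.trans (abs_add_le _ _))
  have hzw₁ : |z₁| ⊓ |w₁| = 0 := inf_eq_zero_of_le (abs_nonneg _) (abs_nonneg _)
    (hz₁.trans inf_le_right) (hw₁.trans inf_le_right) hz
  have hzw₂ : |z₂| ⊓ |w₂| = 0 := inf_eq_zero_of_le (abs_nonneg _) (abs_nonneg _)
    (hz₂.trans inf_le_right) (hw₂.trans inf_le_right) hz
  have hsum : (z₁ + w₁) + (z₂ + w₂) = x₁ + x₂ := by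
    rw [add_add_add_comm, hw, add_sub_cancel]
  -- `z₁ + w₁` and `x₁` are dominated by `|x₁|`, `z₂ + w₂` and `x₂` by `|x₂|`: the two
  -- decompositions of `x₁ + x₂` must agree.
  have h₁ : z₁ + w₁ = x₁ := eq_of_add_eq_add_of_abs_le ha hb hx hsum
    (abs_add_le_of_inf_eq_zero hzw₁ (hz₁.trans inf_le_left) (hw₁.trans inf_le_left)) le_rfl
    (abs_add_le_of_inf_eq_zero hzw₂ (hz₂.trans inf_le_left) (hw₂.trans inf_le_left)) le_rfl
  have h₂ : z₂ + w₂ = x₂ := by rw [h₁] at hsum; exact add_left_cancel hsum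
  refine ⟨z₁, z₂, ?_, ?_, inf_eq_zero_of_le (abs_nonneg _) (abs_nonneg _)
    (hz₁.trans inf_le_left) (hz₂.trans inf_le_left) hx, rfl⟩
  · rwa [← h₁, Fragment, add_sub_cancel_left]
  · rwa [← h₂, Fragment, add_sub_cancel_left]

theorem Admissible.exists_upper_fragment {D : Set α} (hD : Admissible D) {x y y' : α}
    (hy : Fragment y x) (hyD : y ∈ D) (hy' : Fragment y' x) (hy'D : y' ∈ D) :
    ∃ y'', Fragment y'' x ∧ y'' ∈ D ∧ Fragment y y'' ∧ Fragment y' y'' := by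
  obtain ⟨u₁, u₂, hu₁, hu₂, hu, rfl⟩ :=
    Fragment.exists_add_of_inf_eq_zero (x₁ := y) (x₂ := x - y) hy (by rwa [add_sub_cancel])
  have hu₂D : u₂ ∈ D := hD.1 _ hy'D u₂ (fragment_add_right hu)
  obtain ⟨hyu₂x, hyu₂⟩ := hy.add_of_fragment_sub hu₂
  exact ⟨y + u₂, hyu₂x, hD.2 y hyD u₂ hu₂D hyu₂, fragment_add_left hyu₂,
    (Fragment.add hyu₂ hu₁ (fragment_self u₂)).1⟩

end LatticeOrderedGroup

namespace IsBandProj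

section LatticeAddCommGroup

variable {F : Type*} [Lattice F] [AddCommGroup F] {ρ : F → F}

theorem map_sub (hρ : IsBandProj ρ) (a b : F) : ρ (a - b) = ρ a - ρ b :=
  (AddMonoidHom.mk' ρ hρ.1).map_sub a b

theorem map_sub_self (hρ : IsBandProj ρ) (a : F) : ρ (a - ρ a) = 0 := by
  rw [hρ.map_sub, hρ.2.1, sub_self]

theorem nonneg (hρ : IsBandProj ρ) {a : F} (ha : 0 ≤ a) : 0 ≤ ρ a :=
  (hρ.2.2 a ha).1

theorem le_self (hρ : IsBandProj ρ) {a : F} (ha : 0 ≤ a) : ρ a ≤ a :=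
  (hρ.2.2 a ha).2

end LatticeAddCommGroup

section LatticeOrderedGroup

variable {F : Type*} [Lattice F] [AddCommGroup F] [AddLeftMono F] {ρ : F → F}

theorem monotone (hρ : IsBandProj ρ) : Monotone ρ := fun a b h =>
  sub_nonneg.1 (hρ.map_sub b a ▸ hρ.nonneg (sub_nonneg.2 h))

theorem monotone_id_sub (hρ : IsBandProj ρ) : Monotone fun a => a - ρ a := fun a b h => by
  have := hρ.le_self (sub_nonneg.2 h)
  rw [hρ.map_sub] at this
  rw [sub_le_sub_iff] at this ⊢
  rwa [add_comm a]

theorem apply_eq_self_of_le (hρ : IsBandProj ρ) {p q : F} (hp : 0 ≤ p) (hpq : p ≤ ρ q) :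
    ρ p = p := by
  refine le_antisymm (hρ.le_self hp) ?_
  have h := hρ.le_self (sub_nonneg.2 hpq)
  rwa [hρ.map_sub, hρ.2.1, sub_le_sub_iff_left] at h

end LatticeOrderedGroup

theorem map_csSup {F : Type*} [ConditionallyCompleteLattice F] [AddCommGroup F] [AddLeftMono F]
    {ρ : F → F} (hρ : IsBandProj ρ) {A : Set F} (hne : A.Nonempty) (hbdd : BddAbove A) :
    ρ (sSup A) = sSup (ρ '' A) := by
  have hbdd' : BddAbove (ρ '' A) := hρ.monotone.map_bddAbove hbdd
  refine le_antisymm ?_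
    (csSup_le (hne.image ρ) (Set.forall_mem_image.2 fun v hv => hρ.monotone (le_csSup hbdd hv)))
  have h : sSup A ≤ sSup (ρ '' A) + (sSup A - ρ (sSup A)) := csSup_le hne fun v hv =>
    calc v = ρ v + (v - ρ v) := (add_sub_cancel _ _).symm
      _ ≤ _ := add_le_add (le_csSup hbdd' (Set.mem_image_of_mem ρ hv))
        (hρ.monotone_id_sub (le_csSup hbdd hv))
  rwa [add_sub_left_comm, le_add_iff_nonneg_right, sub_nonneg] at h

end IsBandProj

theorem OrthAdd.add {E F : Type*} [Lattice E] [AddCommGroup E] [AddCommGroup F] {T₁ T₂ : E → F}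
    (hT₁ : OrthAdd T₁) (hT₂ : OrthAdd T₂) : OrthAdd fun x => T₁ x + T₂ x := fun x y h => by
  simp only [hT₁ x y h, hT₂ x y h]
  abel

theorem OrthAdd.le_of_fragment {E F : Type*} [Lattice E] [AddCommGroup E] [AddCommGroup F]
    [Preorder F] [AddLeftMono F] {T : E → F} (hT : OrthAdd T) (hT0 : ∀ x, 0 ≤ T x) {x y : E}
    (h : Fragment y x) : T y ≤ T x :=
  calc T y ≤ T y + T (x - y) := le_add_of_nonneg_right (hT0 _)
    _ = T x := by rw [← hT y (x - y) h, add_sub_cancel]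

/-- `sSup (fragmentValues D T x)` is the paper's `π^D T x`. -/
def fragmentValues {E F : Type*} [Lattice E] [AddCommGroup E] (D : Set E) (T : E → F) (x : E) :
    Set F :=
  {v | ∃ y, Fragment y x ∧ y ∈ D ∧ v = T y}

theorem piProj_apply {E F : Type*} [Lattice E] [AddCommGroup E] [ConditionallyCompleteLattice F]
    [AddCommGroup F] (ρ : F → F) (D : Set E) (T : E → F) (x : E) :
    PiProj ρ D T x = ρ (sSup (fragmentValues D T x)) := rfl

theorem fragmentValues_nonempty {E F : Type*} [Lattice E] [AddCommGroup E] [AddLeftMono E]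
    {D : Set E} {T : E → F} (hD0 : (0 : E) ∈ D) (x : E) : (fragmentValues D T x).Nonempty :=
  ⟨T 0, 0, fragment_zero x, hD0, rfl⟩

theorem fragmentValues_bddAbove {E F : Type*} [Lattice E] [AddCommGroup E] [AddCommGroup F]
    [Preorder F] [AddLeftMono F] {D : Set E} {T : E → F} (hT : OrthAdd T) (hT0 : ∀ x, 0 ≤ T x)
    (x : E) : BddAbove (fragmentValues D T x) :=
  ⟨T x, by rintro _ ⟨y, hy, -, rfl⟩; exact hT.le_of_fragment hT0 hy⟩

section FragmentValues

variable {E F : Type*} [Lattice E] [AddCommGroup E] [AddLeftMono E]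
  [ConditionallyCompleteLattice F] [AddCommGroup F] [AddLeftMono F] {D : Set E} {T : E → F}

theorem sSup_fragmentValues_nonneg (hT : OrthAdd T) (hT0 : ∀ x, 0 ≤ T x) (hD0 : (0 : E) ∈ D)
    (x : E) : 0 ≤ sSup (fragmentValues D T x) :=
  (hT0 0).trans (le_csSup (fragmentValues_bddAbove hT hT0 x) ⟨0, fragment_zero x, hD0, rfl⟩)

theorem sSup_fragmentValues_le (hT : OrthAdd T) (hT0 : ∀ x, 0 ≤ T x) (hD0 : (0 : E) ∈ D)
    (x : E) : sSup (fragmentValues D T x) ≤ T x :=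
  csSup_le (fragmentValues_nonempty hD0 x) (by
    rintro _ ⟨y, hy, -, rfl⟩
    exact hT.le_of_fragment hT0 hy)

theorem sSup_fragmentValues_of_mem (hT : OrthAdd T) (hT0 : ∀ x, 0 ≤ T x) (hD0 : (0 : E) ∈ D)
    {y : E} (hyD : y ∈ D) : sSup (fragmentValues D T y) = T y :=
  le_antisymm (sSup_fragmentValues_le hT hT0 hD0 y)
    (le_csSup (fragmentValues_bddAbove hT hT0 y) ⟨y, fragment_self y, hyD, rfl⟩)

theorem sSup_fragmentValues_add (hD : Admissible D) (hD0 : (0 : E) ∈ D) (hT : OrthAdd T)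
    (hT0 : ∀ x, 0 ≤ T x) {x₁ x₂ : E} (hx : |x₁| ⊓ |x₂| = 0) :
    sSup (fragmentValues D T (x₁ + x₂)) =
      sSup (fragmentValues D T x₁) + sSup (fragmentValues D T x₂) := by
  have hbdd := fragmentValues_bddAbove (D := D) hT hT0
  have hne := fragmentValues_nonempty (T := T) hD0
  rw [← csSup_add (hne x₁) (hbdd x₁) (hne x₂) (hbdd x₂)]
  refine le_antisymm (csSup_le (hne _) ?_) (csSup_le ((hne x₁).add (hne x₂)) ?_)
  · rintro _ ⟨z, hz, hzD, rfl⟩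
    obtain ⟨z₁, z₂, hz₁, hz₂, hz₁₂, rfl⟩ := hz.exists_add_of_inf_eq_zero hx
    rw [hT z₁ z₂ hz₁₂]
    exact le_csSup ((hbdd x₁).add (hbdd x₂)) (Set.add_mem_add
      ⟨z₁, hz₁, hD.1 _ hzD _ (fragment_add_left hz₁₂), rfl⟩
      ⟨z₂, hz₂, hD.1 _ hzD _ (fragment_add_right hz₁₂), rfl⟩)
  · rintro _ ⟨_, ⟨y₁, hy₁, hy₁D, rfl⟩, _, ⟨y₂, hy₂, hy₂D, rfl⟩, rfl⟩
    obtain ⟨hy, hy₁₂⟩ := Fragment.add hx hy₁ hy₂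
    show T y₁ + T y₂ ≤ _
    rw [← hT y₁ y₂ hy₁₂]
    exact le_csSup (hbdd _) ⟨y₁ + y₂, hy, hD.2 _ hy₁D _ hy₂D hy₁₂, rfl⟩

theorem sSup_fragmentValues_add_operator (hD : Admissible D) (hD0 : (0 : E) ∈ D)
    {T₁ T₂ : E → F} (hT₁ : OrthAdd T₁) (hT₁0 : ∀ x, 0 ≤ T₁ x) (hT₂ : OrthAdd T₂)
    (hT₂0 : ∀ x, 0 ≤ T₂ x) (x : E) :
    sSup (fragmentValues D (fun y => T₁ y + T₂ y) x) =
      sSup (fragmentValues D T₁ x) + sSup (fragmentValues D T₂ x) := by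
  have hbdd₁ := fragmentValues_bddAbove (D := D) hT₁ hT₁0 x
  have hbdd₂ := fragmentValues_bddAbove (D := D) hT₂ hT₂0 x
  have hbdd := fragmentValues_bddAbove (D := D) (hT₁.add hT₂)
    (fun y => add_nonneg (hT₁0 y) (hT₂0 y)) x
  have hne₁ := fragmentValues_nonempty (T := T₁) hD0 x
  have hne₂ := fragmentValues_nonempty (T := T₂) hD0 x
  rw [← csSup_add hne₁ hbdd₁ hne₂ hbdd₂]
  refine le_antisymm (csSup_le (fragmentValues_nonempty hD0 x) ?_)
    (csSup_le (hne₁.add hne₂) ?_)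
  · rintro _ ⟨y, hy, hyD, rfl⟩
    exact le_csSup (hbdd₁.add hbdd₂) (Set.add_mem_add ⟨y, hy, hyD, rfl⟩ ⟨y, hy, hyD, rfl⟩)
  · rintro _ ⟨_, ⟨y₁, hy₁, hy₁D, rfl⟩, _, ⟨y₂, hy₂, hy₂D, rfl⟩, rfl⟩
    obtain ⟨y, hy, hyD, hy₁y, hy₂y⟩ := hD.exists_upper_fragment hy₁ hy₁D hy₂ hy₂D
    exact (add_le_add (hT₁.le_of_fragment hT₁0 hy₁y) (hT₂.le_of_fragment hT₂0 hy₂y)).trans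
      (le_csSup hbdd ⟨y, hy, hyD, rfl⟩)

theorem add_sSup_fragmentValues_sub_le (hD : Admissible D) (hD0 : (0 : E) ∈ D)
    (hT : OrthAdd T) (hT0 : ∀ x, 0 ≤ T x) {x y : E} (hy : Fragment y x) (hyD : y ∈ D) :
    T y + sSup (fragmentValues D T (x - y)) ≤ sSup (fragmentValues D T x) := by
  rw [← le_sub_iff_add_le']
  refine csSup_le (fragmentValues_nonempty hD0 _) ?_
  rintro _ ⟨z, hz, hzD, rfl⟩
  obtain ⟨hyz, hyz'⟩ := hy.add_of_fragment_sub hz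
  rw [le_sub_iff_add_le', ← hT y z hyz']
  exact le_csSup (fragmentValues_bddAbove hT hT0 x) ⟨y + z, hyz, hD.2 _ hyD _ hzD hyz', rfl⟩

end FragmentValues

section PiProj

variable {E F : Type*} [Lattice E] [AddCommGroup E] [AddLeftMono E]
  [ConditionallyCompleteLattice F] [AddCommGroup F] [AddLeftMono F]
  {ρ : F → F} {D : Set E} {T : E → F}

theorem piProj_nonneg (hρ : IsBandProj ρ) (hD0 : (0 : E) ∈ D) (hT : OrthAdd T)
    (hT0 : ∀ x, 0 ≤ T x) (x : E) : 0 ≤ PiProj ρ D T x :=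
  hρ.nonneg (sSup_fragmentValues_nonneg hT hT0 hD0 x)

theorem piProj_le (hρ : IsBandProj ρ) (hD0 : (0 : E) ∈ D) (hT : OrthAdd T)
    (hT0 : ∀ x, 0 ≤ T x) (x : E) : PiProj ρ D T x ≤ T x :=
  (hρ.le_self (sSup_fragmentValues_nonneg hT hT0 hD0 x)).trans
    (sSup_fragmentValues_le hT hT0 hD0 x)

theorem piProj_of_mem (hD0 : (0 : E) ∈ D) (hT : OrthAdd T) (hT0 : ∀ x, 0 ≤ T x) {y : E}
    (hyD : y ∈ D) : PiProj ρ D T y = ρ (T y) := by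
  rw [piProj_apply, sSup_fragmentValues_of_mem hT hT0 hD0 hyD]

theorem uryson_piProj (hρ : IsBandProj ρ) (hD : Admissible D) (hD0 : (0 : E) ∈ D)
    (hT : Uryson T) (hT0 : ∀ x, 0 ≤ T x) : Uryson (PiProj ρ D T) := by
  refine ⟨fun x₁ x₂ hx => ?_, fun a b => ?_⟩
  · rw [piProj_apply, sSup_fragmentValues_add hD hD0 hT.1 hT0 hx, hρ.1]
    rfl
  · obtain ⟨_, d, h⟩ := hT.2 a b
    exact ⟨0, d, fun x hx =>
      ⟨piProj_nonneg hρ hD0 hT.1 hT0 x, (piProj_le hρ hD0 hT.1 hT0 x).trans (h x hx).2⟩⟩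

theorem piProj_piProj (hρ : IsBandProj ρ) (hD0 : (0 : E) ∈ D) (hT : OrthAdd T)
    (hT0 : ∀ x, 0 ≤ T x) : PiProj ρ D (PiProj ρ D T) = PiProj ρ D T := by
  funext x
  have hvalues : fragmentValues D (PiProj ρ D T) x = ρ '' fragmentValues D T x := by
    ext v
    constructor
    · rintro ⟨y, hy, hyD, rfl⟩
      exact ⟨T y, ⟨y, hy, hyD, rfl⟩, (piProj_of_mem hD0 hT hT0 hyD).symm⟩
    · rintro ⟨_, ⟨y, hy, hyD, rfl⟩, rfl⟩
      exact ⟨y, hy, hyD, (piProj_of_mem hD0 hT hT0 hyD).symm⟩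
  rw [piProj_apply, hvalues, ← hρ.map_csSup (fragmentValues_nonempty hD0 x)
    (fragmentValues_bddAbove hT hT0 x), hρ.2.1, piProj_apply]

theorem piProj_add (hρ : IsBandProj ρ) (hD : Admissible D) (hD0 : (0 : E) ∈ D)
    {T₁ T₂ : E → F} (hT₁ : OrthAdd T₁) (hT₁0 : ∀ x, 0 ≤ T₁ x) (hT₂ : OrthAdd T₂)
    (hT₂0 : ∀ x, 0 ≤ T₂ x) :
    PiProj ρ D (fun x => T₁ x + T₂ x) = fun x => PiProj ρ D T₁ x + PiProj ρ D T₂ x := by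
  funext x
  rw [piProj_apply, sSup_fragmentValues_add_operator hD hD0 hT₁ hT₁0 hT₂ hT₂0, hρ.1]
  rfl

theorem uDisjointPos_piProj (hρ : IsBandProj ρ) (hD : Admissible D) (hD0 : (0 : E) ∈ D)
    (hT : OrthAdd T) (hT0 : ∀ x, 0 ≤ T x) :
    UDisjointPos (PiProj ρ D T) (fun x => T x - PiProj ρ D T x) := by
  intro R hR hR₁ hR₂ x
  set s := sSup (fragmentValues D T x)
  set P := R x ⊔ 0
  have hP : ρ P = P :=
    hρ.apply_eq_self_of_le le_sup_right (sup_le (hR₁ x) (piProj_nonneg hρ hD0 hT hT0 x))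
  have hle : ∀ v ∈ fragmentValues D T x, v ≤ s - P := by
    rintro _ ⟨y, hy, hyD, rfl⟩
    set s' := sSup (fragmentValues D T (x - y))
    have hs' : 0 ≤ s' := sSup_fragmentValues_nonneg hT hT0 hD0 _
    have hRy : R y ≤ T y - ρ (T y) := by
      simpa only [piProj_of_mem hD0 hT hT0 hyD] using hR₂ y
    have hRx : R x = R y + R (x - y) := by rw [← hR.1 y (x - y) hy, add_sub_cancel]
    have hPle : P ≤ (T y - ρ (T y)) + ρ s' :=
      sup_le (hRx ▸ add_le_add hRy (hR₁ (x - y)))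
        (add_nonneg (sub_nonneg.2 (hρ.le_self (hT0 y))) (hρ.nonneg hs'))
    have hPs' : P ≤ ρ s' :=
      calc P = ρ P := hP.symm
        _ ≤ ρ ((T y - ρ (T y)) + ρ s') := hρ.monotone hPle
        _ = ρ s' := by rw [hρ.1, hρ.map_sub_self, hρ.2.1, zero_add]
    calc T y ≤ s - s' := le_sub_iff_add_le.2 (add_sSup_fragmentValues_sub_le hD hD0 hT hT0 hy hyD)
      _ ≤ s - ρ s' := sub_le_sub_left (hρ.le_self hs') s
      _ ≤ s - P := sub_le_sub_left hPs' s
  have hP0 : P ≤ 0 := (le_sub_self_iff s).1 (csSup_le (fragmentValues_nonempty hD0 x) hle)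
  exact le_sup_left.trans hP0

end PiProj

theorem stmt19_general {E F : Type} [Lattice E] [AddCommGroup E]
    [CovariantClass E E (· + ·) (· ≤ ·)]
    [ConditionallyCompleteLattice F] [AddCommGroup F]
    [CovariantClass F F (· + ·) (· ≤ ·)]
    (ρ : F → F) (hρ : IsBandProj ρ)
    (D : Set E) (hD : Admissible D) (hD0 : (0 : E) ∈ D) :
    (∀ T : E → F, Uryson T → (∀ x, 0 ≤ T x) →
      (Uryson (PiProj ρ D T) ∧
        (∀ x, 0 ≤ PiProj ρ D T x ∧ PiProj ρ D T x ≤ T x) ∧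
        PiProj ρ D (PiProj ρ D T) = PiProj ρ D T)) ∧
    (∀ T₁ T₂ : E → F, Uryson T₁ → (∀ x, 0 ≤ T₁ x) → Uryson T₂ → (∀ x, 0 ≤ T₂ x) →
      PiProj ρ D (fun x => T₁ x + T₂ x) =
        fun x => PiProj ρ D T₁ x + PiProj ρ D T₂ x) ∧
    (∀ T : E → F, Uryson T → (∀ x, 0 ≤ T x) →
      UDisjointPos (PiProj ρ D T) (fun x => T x - PiProj ρ D T x)) :=
  ⟨fun _ hT hT0 => ⟨uryson_piProj hρ hD hD0 hT hT0,
      fun x => ⟨piProj_nonneg hρ hD0 hT.1 hT0 x, piProj_le hρ hD0 hT.1 hT0 x⟩,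
      piProj_piProj hρ hD0 hT.1 hT0⟩,
    fun _ _ hT₁ hT₁0 hT₂ hT₂0 => piProj_add hρ hD hD0 hT₁.1 hT₁0 hT₂.1 hT₂0,
    fun _ hT hT0 => uDisjointPos_piProj hρ hD hD0 hT.1 hT0⟩

/-- For a band projection `ρ` on the Dedekind complete `F` and an admissible `D ⊆ E`,
the map `Π : T ↦ ρ ∘ (π^D T)` satisfies `0 ≤ Π T ≤ T` for every positive abstract Uryson
operator `T` and `Π (Π T) = Π T`; hence (Aliprantis–Burkinshaw) `Π` is an order
projection on `U(E,F)`: in particular `Π` is additive on positive Uryson operators and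
`Π T` is a fragment of `T` (i.e. `Π T ⊥ (T - Π T)`). -/
theorem stmt19 {E F : Type} [Lattice E] [AddCommGroup E]
    [CovariantClass E E (· + ·) (· ≤ ·)] [Module ℝ E]
    [ConditionallyCompleteLattice F] [AddCommGroup F]
    [CovariantClass F F (· + ·) (· ≤ ·)] [Module ℝ F]
    (ρ : F → F) (hρ : IsBandProj ρ)
    (D : Set E) (hD : Admissible D) (hD0 : (0 : E) ∈ D) :
    (∀ T : E → F, Uryson T → (∀ x, 0 ≤ T x) →
      (Uryson (PiProj ρ D T) ∧
        (∀ x, 0 ≤ PiProj ρ D T x ∧ PiProj ρ D T x ≤ T x) ∧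
        PiProj ρ D (PiProj ρ D T) = PiProj ρ D T)) ∧
    (∀ T₁ T₂ : E → F, Uryson T₁ → (∀ x, 0 ≤ T₁ x) → Uryson T₂ → (∀ x, 0 ≤ T₂ x) →
      PiProj ρ D (fun x => T₁ x + T₂ x) =
        fun x => PiProj ρ D T₁ x + PiProj ρ D T₂ x) ∧
    (∀ T : E → F, Uryson T → (∀ x, 0 ≤ T x) →
      UDisjointPos (PiProj ρ D T) (fun x => T x - PiProj ρ D T x)) :=
  stmt19_general ρ hρ D hD hD0
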